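/- Every cycle of length 5 in the crossing graph of K6 can be obtained, by applying a rotation x ↦ x+k (mod 6) or reflection x ↦ c−x (mod 6) of the vertex labels together with a cyclic rotation or reversal of the sequence, from one of the following three cyclic sequences of interior edges (ab denoting {a,b}): (13,24,35,46,25), (13,24,35,14,25), (13,24,36,14,25); and no two of these three are related by such symmetries. -/

import Mathlib

/-- The cyclic length of the chord joining vertices `a` and `b` of `K₆`,
whose vertices are labeled by `ZMod 6` in cyclic order around a circle. -/
def cycLen (a b : ZMod 6) : ℕ := min (b - a).val (a - b).val

/-- An interior edge of `K₆`: a 2-element set of vertices at cyclic distance at least 2. -/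
def InteriorEdge (e : Finset (ZMod 6)) : Prop :=
  e.card = 2 ∧ ∀ a ∈ e, ∀ b ∈ e, a ≠ b → 2 ≤ cycLen a b

/-- A short edge of `K₆`: a 2-element set of vertices at cyclic distance exactly 2. -/
def ShortEdge (e : Finset (ZMod 6)) : Prop :=
  e.card = 2 ∧ ∀ a ∈ e, ∀ b ∈ e, a ≠ b → cycLen a b = 2

/-- A long edge of `K₆`: a 2-element set of vertices at cyclic distance exactly 3. -/
def LongEdge (e : Finset (ZMod 6)) : Prop :=
  e.card = 2 ∧ ∀ a ∈ e, ∀ b ∈ e, a ≠ b → cycLen a b = 3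

/-- `x` lies in the open cyclic arc from `a` to `b` (in the cyclic order of labels). -/
def InArc (a b x : ZMod 6) : Prop := 0 < (x - a).val ∧ (x - a).val < (b - a).val

/-- Two chords `{a,b}` and `{c,d}` cross iff their endpoint sets are disjoint and
exactly one of `c`, `d` lies in the open cyclic arc from `a` to `b`. -/
def Crosses (e f : Finset (ZMod 6)) : Prop :=
  Disjoint e f ∧ ∃ a b c d : ZMod 6, a ≠ b ∧ c ≠ d ∧ e = {a, b} ∧ f = {c, d} ∧
    Xor' (InArc a b c) (InArc a b d)

def e13 : Finset (ZMod 6) := {1, 3}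
def e15 : Finset (ZMod 6) := {1, 5}
def e24 : Finset (ZMod 6) := {2, 4}
def e26 : Finset (ZMod 6) := {2, 6}
def e35 : Finset (ZMod 6) := {3, 5}
def e46 : Finset (ZMod 6) := {4, 6}
def e14 : Finset (ZMod 6) := {1, 4}
def e25 : Finset (ZMod 6) := {2, 5}
def e36 : Finset (ZMod 6) := {3, 6}

/-- A symmetry of the vertex labels: a rotation `x ↦ x + k` or a reflection
`x ↦ k - x` of `ZMod 6`. -/
def DihedralMap (φ : ZMod 6 → ZMod 6) : Prop :=
  (∃ k : ZMod 6, ∀ x, φ x = x + k) ∨ (∃ k : ZMod 6, ∀ x, φ x = k - x)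

/-- A symmetry of a cyclic sequence of length `s`: a cyclic rotation `i ↦ i + t`
or a reversal `i ↦ t - i` of the index set `ZMod s`. -/
def SeqSym {s : ℕ} (ψ : ZMod s → ZMod s) : Prop :=
  (∃ t : ZMod s, ∀ i, ψ i = i + t) ∨ (∃ t : ZMod s, ∀ i, ψ i = t - i)

/-- A cycle of length `s` in the crossing graph of `K₆`: a cyclic sequence of `s`
distinct interior edges, each crossing the next (cyclically). -/
def IsCycle {s : ℕ} (c : ZMod s → Finset (ZMod 6)) : Prop :=
  Function.Injective c ∧ (∀ i, InteriorEdge (c i)) ∧ (∀ i, Crosses (c i) (c (i + 1)))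

/-- `d` is obtained from `c` by applying a rotation or reflection of the vertex labels
together with a cyclic rotation or reversal of the sequence. -/
def ObtainedFrom {s : ℕ} (c d : ZMod s → Finset (ZMod 6)) : Prop :=
  ∃ (φ : ZMod 6 → ZMod 6) (ψ : ZMod s → ZMod s),
    DihedralMap φ ∧ SeqSym ψ ∧ ∀ i, d i = (c (ψ i)).image φ

def cyc5a : ZMod 5 → Finset (ZMod 6) := fun i => [e13, e24, e35, e46, e25].getD i.val ∅
def cyc5b : ZMod 5 → Finset (ZMod 6) := fun i => [e13, e24, e35, e14, e25].getD i.val ∅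
def cyc5c : ZMod 5 → Finset (ZMod 6) := fun i => [e13, e24, e36, e14, e25].getD i.val ∅

/-!
Every interior edge is one of nine chords `{a, b}`, and two of them cross exactly when they are
disjoint and the endpoints of the second lie on different sides of the first; this does not
depend on the order in which the endpoints are listed, since swapping `a` and `b` swaps the two
arcs (`inArc_swap`). With the crossing relation in this form, an exhaustive search over the
closed crossing walks through five distinct chords (there are 180) finds for each one a symmetry
carrying one of the three model cycles onto it. The three models are pairwise inequivalent since
none of the 120 symmetries relates two of them.
-/

theorem Finset.pair_eq_pair_iff {α : Type*} [DecidableEq α] {x y z w : α} :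
    ({x, y} : Finset α) = {z, w} ↔ x = z ∧ y = w ∨ x = w ∧ y = z := by
  rw [← Finset.coe_inj, Finset.coe_pair, Finset.coe_pair, Set.pair_eq_pair_iff]

instance (a b x : ZMod 6) : Decidable (InArc a b x) := inferInstanceAs (Decidable (_ ∧ _))

theorem inArc_swap : ∀ {a b x : ZMod 6}, a ≠ b → x ≠ a → x ≠ b →
    (InArc b a x ↔ ¬ InArc a b x) := by
  decide

theorem crosses_pair_iff {a b c d : ZMod 6} (hab : a ≠ b) (hcd : c ≠ d) :
    Crosses {a, b} {c, d} ↔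
      Disjoint ({a, b} : Finset (ZMod 6)) {c, d} ∧ Xor (InArc a b c) (InArc a b d) := by
  refine ⟨fun ⟨hdisj, a', b', c', d', _, _, hab', hcd', hx⟩ => ⟨hdisj, ?_⟩,
    fun ⟨hdisj, hx⟩ => ⟨hdisj, a, b, c, d, hab, hcd, rfl, rfl, hx⟩⟩
  have hx' : Xor (InArc a' b' c) (InArc a' b' d) := by
    rcases Finset.pair_eq_pair_iff.mp hcd' with ⟨rfl, rfl⟩ | ⟨rfl, rfl⟩
    · exact hx
    · exact (xor_comm _ _).mp hx
  rcases Finset.pair_eq_pair_iff.mp hab' with ⟨rfl, rfl⟩ | ⟨rfl, rfl⟩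
  · exact hx'
  · simp only [Finset.disjoint_insert_left, Finset.disjoint_insert_right, Finset.mem_insert,
      Finset.mem_singleton, Finset.disjoint_singleton] at hdisj
    rwa [inArc_swap hab (by tauto) (by tauto), inArc_swap hab (by tauto) (by tauto),
      xor_not_not] at hx'

theorem obtainedFrom_iff {s : ℕ} (c d : ZMod s → Finset (ZMod 6)) :
    ObtainedFrom c d ↔ ∃ k : ZMod 6, ∃ t : ZMod s,
      (∀ i, d i = (c (i + t)).image (· + k)) ∨ (∀ i, d i = (c (t - i)).image (· + k)) ∨
      (∀ i, d i = (c (i + t)).image (k - ·)) ∨ (∀ i, d i = (c (t - i)).image (k - ·)) := by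
  constructor
  · rintro ⟨φ, ψ, ⟨k, hφ⟩ | ⟨k, hφ⟩, ⟨t, hψ⟩ | ⟨t, hψ⟩, h⟩ <;>
      obtain rfl : φ = _ := funext hφ <;> simp only [h, hψ] <;> exact ⟨k, t, by tauto⟩
  · rintro ⟨k, t, h | h | h | h⟩
    · exact ⟨_, _, .inl ⟨k, fun _ => rfl⟩, .inl ⟨t, fun _ => rfl⟩, h⟩
    · exact ⟨_, _, .inl ⟨k, fun _ => rfl⟩, .inr ⟨t, fun _ => rfl⟩, h⟩
    · exact ⟨_, _, .inr ⟨k, fun _ => rfl⟩, .inl ⟨t, fun _ => rfl⟩, h⟩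
    · exact ⟨_, _, .inr ⟨k, fun _ => rfl⟩, .inr ⟨t, fun _ => rfl⟩, h⟩

instance {s : ℕ} [NeZero s] (c d : ZMod s → Finset (ZMod 6)) : Decidable (ObtainedFrom c d) :=
  decidable_of_iff' _ (obtainedFrom_iff c d)

-- vertex `6` is `0 : ZMod 6`
def interiorEdgeEnds : Fin 9 → ZMod 6 × ZMod 6 :=
  ![(1, 3), (2, 4), (3, 5), (4, 0), (5, 1), (0, 2), (1, 4), (2, 5), (3, 0)]

def interiorEdge (j : Fin 9) : Finset (ZMod 6) := {(interiorEdgeEnds j).1, (interiorEdgeEnds j).2}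

theorem InteriorEdge.exists_eq_interiorEdge : ∀ {e}, InteriorEdge e → ∃ j, interiorEdge j = e := by
  unfold InteriorEdge; decide

theorem interiorEdgeEnds_ne : ∀ j, (interiorEdgeEnds j).1 ≠ (interiorEdgeEnds j).2 := by
  decide

def InteriorEdgesCross (i j : Fin 9) : Prop :=
  Disjoint (interiorEdge i) (interiorEdge j) ∧
    Xor (InArc (interiorEdgeEnds i).1 (interiorEdgeEnds i).2 (interiorEdgeEnds j).1)
      (InArc (interiorEdgeEnds i).1 (interiorEdgeEnds i).2 (interiorEdgeEnds j).2)

instance : DecidableRel InteriorEdgesCross := fun _ _ => inferInstanceAs (Decidable (_ ∧ _))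

theorem crosses_interiorEdge_iff (i j : Fin 9) :
    Crosses (interiorEdge i) (interiorEdge j) ↔ InteriorEdgesCross i j :=
  crosses_pair_iff (interiorEdgeEnds_ne i) (interiorEdgeEnds_ne j)

def ObtainedFromModel (d : ZMod 5 → Finset (ZMod 6)) : Prop :=
  ObtainedFrom cyc5a d ∨ ObtainedFrom cyc5b d ∨ ObtainedFrom cyc5c d

theorem obtainedFromModel_of_closed_walk : ∀ x₀ x₁ : Fin 9, InteriorEdgesCross x₀ x₁ →
    ∀ x₂, InteriorEdgesCross x₁ x₂ ∧ x₂ ≠ x₀ →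
    ∀ x₃, InteriorEdgesCross x₂ x₃ ∧ x₃ ≠ x₀ ∧ x₃ ≠ x₁ →
    ∀ x₄, InteriorEdgesCross x₃ x₄ ∧ InteriorEdgesCross x₄ x₀ ∧ x₄ ≠ x₁ ∧ x₄ ≠ x₂ →
    ObtainedFromModel (fun i => interiorEdge (![x₀, x₁, x₂, x₃, x₄] i)) := by
  unfold ObtainedFromModel; decide +kernel

theorem IsCycle.obtainedFromModel {c : ZMod 5 → Finset (ZMod 6)} (hc : IsCycle c) :
    ObtainedFromModel c := by
  obtain ⟨hinj, hint, hcross⟩ := hc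
  choose x hx using fun i => (hint i).exists_eq_interiorEdge
  have cross (i : ZMod 5) : InteriorEdgesCross (x i) (x (i + 1)) := by
    rw [← crosses_interiorEdge_iff, hx, hx]
    exact hcross i
  have ne {i j : ZMod 5} (h : i ≠ j) : x j ≠ x i := fun h' => h (hinj (by rw [← hx, ← hx, h']))
  have hc : c = fun i => interiorEdge (![x 0, x 1, x 2, x 3, x 4] i) := by
    funext i
    fin_cases i <;> exact (hx _).symm
  rw [hc]
  exact obtainedFromModel_of_closed_walk _ _ (cross 0) _ ⟨cross 1, ne (by decide)⟩
    _ ⟨cross 2, ne (by decide), ne (by decide)⟩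
    _ ⟨cross 3, cross 4, ne (by decide), ne (by decide)⟩

/-- Every cycle of length 5 in the crossing graph of `K₆` is obtained, via a rotation or
reflection of the vertex labels together with a cyclic rotation or reversal of the
sequence, from one of `(13,24,35,46,25)`, `(13,24,35,14,25)`, `(13,24,36,14,25)`;
and no two of these three are related by such symmetries. -/
theorem stmt_15 :
    (∀ c : ZMod 5 → Finset (ZMod 6), IsCycle c →
      ObtainedFrom cyc5a c ∨ ObtainedFrom cyc5b c ∨ ObtainedFrom cyc5c c) ∧
    ¬ ObtainedFrom cyc5a cyc5b ∧ ¬ ObtainedFrom cyc5b cyc5a ∧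
    ¬ ObtainedFrom cyc5a cyc5c ∧ ¬ ObtainedFrom cyc5c cyc5a ∧
    ¬ ObtainedFrom cyc5b cyc5c ∧ ¬ ObtainedFrom cyc5c cyc5b := by
  refine ⟨fun c hc => hc.obtainedFromModel, ?_, ?_, ?_, ?_, ?_, ?_⟩ <;> decide
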